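/- Preservation: if e is well-typed with type τ and effect η, the state s is well-formed, and (s, e) steps to (s', e'), then e' is well-typed with the same type τ and some effect η' with η' ⊆ η, and s' is well-formed (possibly with respect to an extended store typing Σ' ⊇ Σ). -/
import Mathlib


/-- Types of the BeePL core language. -/
inductive Ty : Type
  | int : Ty
  | bool : Ty
  | unit : Ty
  | ptr : Ty → Ty
  | opt : Ty → Ty
deriving DecidableEq

/-- Effects. -/
inductive Eff : Type
  | divergence | read | write | alloc | io
deriving DecidableEq

/-- Expressions of the BeePL core language. -/
inductive Expr : Type
  | var : String → Expr
  | intC : Int → Expr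
  | boolC : Bool → Expr
  | unitC : Expr
  | loc : Nat → Expr
  | ref : Expr → Expr
  | deref : Expr → Expr
  | assign : Expr → Expr → Expr
  | uop : Expr → Expr
  | bop : Expr → Expr → Expr
  | letin : String → Ty → Expr → Expr → Expr
  | cond : Expr → Expr → Expr → Expr
  | noneE : Expr
  | someE : Expr → Expr
  | matchE : Expr → Expr → String → Expr → Expr
deriving DecidableEq

/-- Substitution `e'[x := s]`; `let`/`match` bindings of the same name shadow. -/
def subst (x : String) (s : Expr) : Expr → Expr
  | .var y => if y = x then s else .var y
  | .intC n => .intC n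
  | .boolC b => .boolC b
  | .unitC => .unitC
  | .loc l => .loc l
  | .ref e => .ref (subst x s e)
  | .deref e => .deref (subst x s e)
  | .assign e1 e2 => .assign (subst x s e1) (subst x s e2)
  | .uop e => .uop (subst x s e)
  | .bop e1 e2 => .bop (subst x s e1) (subst x s e2)
  | .letin y τ e1 e2 => .letin y τ (subst x s e1) (if y = x then e2 else subst x s e2)
  | .cond e e1 e2 => .cond (subst x s e) (subst x s e1) (subst x s e2)
  | .noneE => .noneE
  | .someE e => .someE (subst x s e)
  | .matchE m e1 y e2 => .matchE (subst x s m) (subst x s e1) y (if y = x then e2 else subst x s e2)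

/-- Extend a typing context. -/
def updTC (Γ : String → Option Ty) (x : String) (τ : Ty) : String → Option Ty :=
  fun y => if y = x then some τ else Γ y

/-- Typing judgment `Γ; Σ ⊢ e : τ, η`. -/
inductive HasType : (String → Option Ty) → (Nat → Option Ty) → Expr → Ty → List Eff → Prop
  | var {Γ St x τ} : Γ x = some τ → HasType Γ St (.var x) τ []
  | intC {Γ St n} : HasType Γ St (.intC n) .int []
  | boolC {Γ St b} : HasType Γ St (.boolC b) .bool []
  | unitC {Γ St} : HasType Γ St .unitC .unit []
  | loc {Γ St l τ} : St l = some τ → HasType Γ St (.loc l) (.ptr τ) []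
  | ref {Γ St e τ η} : HasType Γ St e τ η →
      HasType Γ St (.ref e) (.ptr τ) (.alloc :: η)
  | deref {Γ St e τ η} : HasType Γ St e (.ptr τ) η →
      HasType Γ St (.deref e) τ (.read :: η)
  | assign {Γ St e1 e2 τ η1 η2} : HasType Γ St e1 (.ptr τ) η1 → HasType Γ St e2 τ η2 →
      HasType Γ St (.assign e1 e2) .unit (η1 ++ η2 ++ [.write])
  | uop {Γ St e η} : HasType Γ St e .int η → HasType Γ St (.uop e) .int η
  | bop {Γ St e1 e2 η1 η2} : HasType Γ St e1 .int η1 → HasType Γ St e2 .int η2 →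
      HasType Γ St (.bop e1 e2) .int (η1 ++ η2)
  | letin {Γ St x τ1 τ2 e1 e2 η1 η2} : HasType Γ St e1 τ1 η1 →
      HasType (updTC Γ x τ1) St e2 τ2 η2 →
      HasType Γ St (.letin x τ1 e1 e2) τ2 (η1 ++ η2)
  | cond {Γ St e e1 e2 τ η η1 η2} : HasType Γ St e .bool η → HasType Γ St e1 τ η1 →
      HasType Γ St e2 τ η2 → HasType Γ St (.cond e e1 e2) τ (η ++ η1 ++ η2)
  | noneE {Γ St τ} : HasType Γ St .noneE (.opt (.ptr τ)) []
  | someE {Γ St e τ η} : HasType Γ St e (.ptr τ) η →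
      HasType Γ St (.someE e) (.opt (.ptr τ)) η
  | matchE {Γ St m e1 x e2 τm τ ηm η1 η2} : HasType Γ St m (.opt (.ptr τm)) ηm →
      HasType Γ St e1 τ η1 → HasType (updTC Γ x (.ptr τm)) St e2 τ η2 →
      HasType Γ St (.matchE m e1 x e2) τ (ηm ++ η1 ++ η2)

/-- Values. -/
inductive IsVal : Expr → Prop
  | intC {n} : IsVal (.intC n)
  | boolC {b} : IsVal (.boolC b)
  | unitC : IsVal .unitC
  | loc {l} : IsVal (.loc l)
  | noneE : IsVal .noneE
  | someE {v} : IsVal v → IsVal (.someE v)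

/-- Program states: global environment Δ, variable environment Ω, memory Θ. -/
structure State where
  glob : String → Option Nat
  env : String → Option (Nat × Ty)
  mem : Nat → Option Expr

/-- Update the memory of a state. -/
def setMem (s : State) (l : Nat) (v : Expr) : State :=
  { s with mem := fun l' => if l' = l then some v else s.mem l' }

/-- Well-formedness of a state with respect to Γ and Σ. -/
def WFState (Γ : String → Option Ty) (St : Nat → Option Ty) (s : State) : Prop :=
  (∀ x τ, Γ x = some τ →
      ∃ l, (s.env x = some (l, τ) ∨ (s.env x = none ∧ s.glob x = some l)) ∧
        St l = some τ) ∧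
  (∀ l τ, St l = some τ → ∃ v, s.mem l = some v ∧ IsVal v ∧ HasType Γ St v τ []) ∧
  (∀ l v, s.mem l = some v → ∃ τ, St l = some τ)

/-- Small-step operational semantics, call-by-value, left-to-right. -/
inductive Step : State → Expr → State → Expr → Prop
  | varLocal {s x l τ v} : s.env x = some (l, τ) → s.mem l = some v →
      Step s (.var x) s v
  | varGlobal {s x l v} : s.env x = none → s.glob x = some l → s.mem l = some v →
      Step s (.var x) s v
  | refCtx {s s' e e'} : Step s e s' e' → Step s (.ref e) s' (.ref e')
  | refVal {s v l} : IsVal v → s.mem l = none →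
      Step s (.ref v) (setMem s l v) (.loc l)
  | derefCtx {s s' e e'} : Step s e s' e' → Step s (.deref e) s' (.deref e')
  | derefVal {s l v} : s.mem l = some v → Step s (.deref (.loc l)) s v
  | assignCtx1 {s s' e1 e1' e2} : Step s e1 s' e1' →
      Step s (.assign e1 e2) s' (.assign e1' e2)
  | assignCtx2 {s s' v e2 e2'} : IsVal v → Step s e2 s' e2' →
      Step s (.assign v e2) s' (.assign v e2')
  | assignVal {s l v w} : IsVal v → s.mem l = some w →
      Step s (.assign (.loc l) v) (setMem s l v) .unitC
  | uopCtx {s s' e e'} : Step s e s' e' → Step s (.uop e) s' (.uop e')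
  | uopVal {s n} : Step s (.uop (.intC n)) s (.intC (-n))
  | bopCtx1 {s s' e1 e1' e2} : Step s e1 s' e1' →
      Step s (.bop e1 e2) s' (.bop e1' e2)
  | bopCtx2 {s s' v e2 e2'} : IsVal v → Step s e2 s' e2' →
      Step s (.bop v e2) s' (.bop v e2')
  | bopVal {s n1 n2} : Step s (.bop (.intC n1) (.intC n2)) s (.intC (n1 + n2))
  | letCtx {s s' x τ e1 e1' e2} : Step s e1 s' e1' →
      Step s (.letin x τ e1 e2) s' (.letin x τ e1' e2)
  | letVal {s x τ v e2} : IsVal v → Step s (.letin x τ v e2) s (subst x v e2)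
  | condCtx {s s' e e' e1 e2} : Step s e s' e' →
      Step s (.cond e e1 e2) s' (.cond e' e1 e2)
  | condT {s e1 e2} : Step s (.cond (.boolC true) e1 e2) s e1
  | condF {s e1 e2} : Step s (.cond (.boolC false) e1 e2) s e2
  | someCtx {s s' e e'} : Step s e s' e' → Step s (.someE e) s' (.someE e')
  | matchCtx {s s' m m' e1 x e2} : Step s m s' m' →
      Step s (.matchE m e1 x e2) s' (.matchE m' e1 x e2)
  | matchNone {s e1 x e2} : Step s (.matchE .noneE e1 x e2) s e1
  | matchSome {s v e1 x e2} : IsVal v →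
      Step s (.matchE (.someE v) e1 x e2) s (subst x v e2)

/-- Multi-step evaluation counting the number of steps. -/
inductive Steps : State → Expr → State → Expr → Nat → Prop
  | refl {s e} : Steps s e s e 0
  | tail {s e s' e' s'' e'' n} : Steps s e s' e' n → Step s' e' s'' e'' →
      Steps s e s'' e'' (n + 1)

/-- An expression is irreducible in a state if no step is possible. -/
def StuckExpr (s : State) (e : Expr) : Prop := ¬ ∃ s' e', Step s e s' e'

/-- Store-typing monotonicity (weakening). -/
theorem HasType.mono {Γ : String → Option Ty} {St St' : Nat → Option Ty}
    {e : Expr} {τ : Ty} {η : List Eff}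
    (h : HasType Γ St e τ η)
    (hs : ∀ l τ₀, St l = some τ₀ → St' l = some τ₀) :
    HasType Γ St' e τ η := by
  induction h with
  | var h => exact .var h
  | intC => exact .intC
  | boolC => exact .boolC
  | unitC => exact .unitC
  | loc h => exact .loc (hs _ _ h)
  | ref _ ih => exact .ref (ih hs)
  | deref _ ih => exact .deref (ih hs)
  | assign _ _ ih1 ih2 => exact .assign (ih1 hs) (ih2 hs)
  | uop _ ih => exact .uop (ih hs)
  | bop _ _ ih1 ih2 => exact .bop (ih1 hs) (ih2 hs)
  | letin _ _ ih1 ih2 => exact .letin (ih1 hs) (ih2 hs)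
  | cond _ _ _ ih ih1 ih2 => exact .cond (ih hs) (ih1 hs) (ih2 hs)
  | noneE => exact .noneE
  | someE _ ih => exact .someE (ih hs)
  | matchE _ _ _ ihm ih1 ih2 => exact .matchE (ihm hs) (ih1 hs) (ih2 hs)

/-- A value is typed with empty effects in any context. -/
theorem val_ty {St : Nat → Option Ty} {v : Expr} {τ : Ty} {η : List Eff}
    {Γ : String → Option Ty}
    (hv : IsVal v) (h : HasType Γ St v τ η) :
    ∀ Γ', HasType Γ' St v τ [] := by
  induction hv generalizing τ η with
  | intC => cases h; intro _; exact .intC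
  | boolC => cases h; intro _; exact .boolC
  | unitC => cases h; intro _; exact .unitC
  | loc => cases h with | loc h => exact fun _ => .loc h
  | noneE => cases h; intro _; exact .noneE
  | someE _ ih => cases h with | someE h' => exact fun Γ' => .someE (ih h' Γ')

theorem updTC_shadow (Γ : String → Option Ty) (x : String) (τ1 τ' : Ty) :
    updTC (updTC Γ x τ1) x τ' = updTC Γ x τ' := by
  funext z; simp only [updTC]; by_cases hz : z = x <;> simp [hz]

theorem updTC_comm (Γ : String → Option Ty) {x y : String} (τ1 τ' : Ty)
    (hyx : ¬ y = x) :
    updTC (updTC Γ x τ1) y τ' = updTC (updTC Γ y τ') x τ1 := by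
  funext z; simp only [updTC]
  by_cases hz : z = y
  · subst hz; simp [hyx]
  · by_cases hzx : z = x
    · have hxy : ¬ x = y := fun h => hyx h.symm
      simp [hz, hzx, hxy]
    · simp [hz, hzx]

/-- Substitution lemma. -/
theorem subst_ty {St : Nat → Option Ty} {x : String} {v : Expr} {τ1 : Ty}
    (hv : ∀ Γ', HasType Γ' St v τ1 [])
    {e : Expr} {Γ : String → Option Ty} {τ : Ty} {η : List Eff}
    (ht : HasType (updTC Γ x τ1) St e τ η) :
    HasType Γ St (subst x v e) τ η := by
  induction e generalizing Γ τ η with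
  | var y =>
    cases ht with
    | var h =>
      simp only [updTC] at h
      by_cases hyx : y = x
      · simp [subst, hyx] at h ⊢
        cases h; exact hv Γ
      · simp [hyx] at h
        simp [subst, hyx]
        exact .var h
  | intC n => cases ht; exact .intC
  | boolC b => cases ht; exact .boolC
  | unitC => cases ht; exact .unitC
  | loc l => cases ht with | loc h => exact .loc h
  | ref e ih => cases ht with | ref h => exact .ref (ih h)
  | deref e ih => cases ht with | deref h => exact .deref (ih h)
  | assign e1 e2 ih1 ih2 =>
    cases ht with | assign h1 h2 => exact .assign (ih1 h1) (ih2 h2)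
  | uop e ih => cases ht with | uop h => exact .uop (ih h)
  | bop e1 e2 ih1 ih2 =>
    cases ht with | bop h1 h2 => exact .bop (ih1 h1) (ih2 h2)
  | letin y τ' e1 e2 ih1 ih2 =>
    cases ht with
    | letin h1 h2 =>
      by_cases hyx : y = x
      · subst hyx
        simp only [subst, if_pos rfl]
        refine .letin (ih1 h1) ?_
        rwa [updTC_shadow] at h2
      · simp only [subst, if_neg hyx]
        refine .letin (ih1 h1) (ih2 ?_)
        rwa [updTC_comm Γ τ1 τ' hyx] at h2
  | cond e e1 e2 ih ih1 ih2 =>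
    cases ht with | cond h h1 h2 => exact .cond (ih h) (ih1 h1) (ih2 h2)
  | noneE => cases ht; exact .noneE
  | someE e ih => cases ht with | someE h => exact .someE (ih h)
  | matchE m e1 y e2 ihm ih1 ih2 =>
    cases ht with
    | matchE hm h1 h2 =>
      by_cases hyx : y = x
      · subst hyx
        simp only [subst, if_pos rfl]
        refine .matchE (ihm hm) (ih1 h1) ?_
        rwa [updTC_shadow] at h2
      · simp only [subst, if_neg hyx]
        refine .matchE (ihm hm) (ih1 h1) (ih2 ?_)
        rwa [updTC_comm Γ τ1 _ hyx] at h2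

theorem sub_app_left {α} {l1 l1' l2 : List α} (h : l1' ⊆ l1) :
    l1' ++ l2 ⊆ l1 ++ l2 := fun a ha => by
  rcases List.mem_append.1 ha with h' | h'
  · exact List.mem_append.2 (Or.inl (h h'))
  · exact List.mem_append.2 (Or.inr h')

theorem sub_app_right {α} {l1 l2 l2' : List α} (h : l2' ⊆ l2) :
    l1 ++ l2' ⊆ l1 ++ l2 := fun a ha => by
  rcases List.mem_append.1 ha with h' | h'
  · exact List.mem_append.2 (Or.inl h')
  · exact List.mem_append.2 (Or.inr (h h'))

/-- Preservation. -/
theorem preservation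
    (Γ : String → Option Ty) (St : Nat → Option Ty)
    (e e' : Expr) (τ : Ty) (η : List Eff) (s s' : State)
    (ht : HasType Γ St e τ η) (hwf : WFState Γ St s)
    (hstep : Step s e s' e') :
    ∃ (St' : Nat → Option Ty) (η' : List Eff),
      (∀ l τ₀, St l = some τ₀ → St' l = some τ₀) ∧
      HasType Γ St' e' τ η' ∧ η' ⊆ η ∧ WFState Γ St' s' := by
  revert hwf ht
  induction hstep generalizing τ η with
  | @varLocal x l τx v henv hm =>
    intro ht hwf
    cases ht with
    | var hΓ =>
      obtain ⟨l0, hl0, hSl0⟩ := hwf.1 x τ hΓ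
      rcases hl0 with h | ⟨h, _⟩
      · rw [henv] at h
        simp only [Option.some.injEq, Prod.mk.injEq] at h
        obtain ⟨h1, h2⟩ := h
        subst h1; subst h2
        obtain ⟨w, hw, hwval, hwty⟩ := hwf.2.1 _ _ hSl0
        rw [hm] at hw; injection hw with hw; subst hw
        exact ⟨St, [], fun _ _ h => h, hwty, by simp, hwf⟩
      · rw [henv] at h; cases h
  | @varGlobal x l v henv hg hm =>
    intro ht hwf
    cases ht with
    | var hΓ =>
      obtain ⟨l0, hl0, hSl0⟩ := hwf.1 x τ hΓ
      rcases hl0 with h | ⟨_, h⟩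
      · rw [henv] at h; cases h
      · rw [hg] at h; injection h with h; subst h
        obtain ⟨w, hw, hwval, hwty⟩ := hwf.2.1 l τ hSl0
        rw [hm] at hw; injection hw with hw; subst hw
        exact ⟨St, [], fun _ _ h => h, hwty, by simp, hwf⟩
  | refCtx hst ih =>
    intro ht hwf
    cases ht with
    | ref h =>
      obtain ⟨St', η', hext, ht', hsub, hwf'⟩ := ih _ _ h hwf
      exact ⟨St', .alloc :: η', hext, .ref ht', List.cons_subset_cons _ hsub, hwf'⟩
  | @refVal v lr hv hm =>
    intro ht hwf
    cases ht with
    | @ref _ _ _ τ0 η0 h =>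
      have hSl : St lr = none := by
        cases hSl : St lr with
        | none => rfl
        | some τ' =>
          obtain ⟨w, hw, _, _⟩ := hwf.2.1 lr τ' hSl
          rw [hm] at hw; cases hw
      refine ⟨fun lr' => if lr' = lr then some τ0 else St lr', [], ?_, ?_, by simp, ?_, ?_, ?_⟩
      · intro lr' τ' h'
        by_cases hl' : lr' = lr
        · subst hl'; rw [hSl] at h'; cases h'
        · simp [hl', h']
      · exact .loc (by simp)
      · intro y τy hΓ
        obtain ⟨l0, hl0, hSl0⟩ := hwf.1 y τy hΓ
        refine ⟨l0, hl0, ?_⟩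
        by_cases hl0l : l0 = lr
        · subst hl0l; rw [hSl] at hSl0; cases hSl0
        · simp [hl0l, hSl0]
      · intro la τa ha
        by_cases hla : la = lr
        · simp only [hla, if_pos, reduceIte, Option.some.injEq] at ha
          subst ha
          refine ⟨v, by simp [setMem, hla], hv, ?_⟩
          refine (val_ty hv h Γ).mono ?_
          intro lb τb hb
          by_cases hlb : lb = lr
          · rw [hlb, hSl] at hb; cases hb
          · simp [hlb, hb]
        · simp only [if_neg hla] at ha
          obtain ⟨w, hw, hwval, hwty⟩ := hwf.2.1 la τa ha
          refine ⟨w, by simp [setMem, hla, hw], hwval, hwty.mono ?_⟩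
          intro lb τb hb
          by_cases hlb : lb = lr
          · rw [hlb, hSl] at hb; cases hb
          · simp [hlb, hb]
      · intro lr' w hw
        simp only [setMem] at hw
        by_cases hl' : lr' = lr
        · exact ⟨τ0, by simp [hl']⟩
        · simp only [if_neg hl'] at hw
          obtain ⟨τ', hτ'⟩ := hwf.2.2 lr' w hw
          exact ⟨τ', by simp [hl', hτ']⟩
  | derefCtx hst ih =>
    intro ht hwf
    cases ht with
    | deref h =>
      obtain ⟨St', η', hext, ht', hsub, hwf'⟩ := ih _ _ h hwf
      exact ⟨St', .read :: η', hext, .deref ht', List.cons_subset_cons _ hsub, hwf'⟩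
  | @derefVal l v hm =>
    intro ht hwf
    cases ht with
    | deref h =>
      cases h with
      | loc hSl =>
        obtain ⟨w, hw, hwval, hwty⟩ := hwf.2.1 l τ hSl
        rw [hm] at hw; injection hw with hw; subst hw
        exact ⟨St, [], fun _ _ h => h, hwty, by simp, hwf⟩
  | assignCtx1 hst ih =>
    intro ht hwf
    cases ht with
    | @assign _ _ _ _ _ η1 η2 h1 h2 =>
      obtain ⟨St', η1', hext, ht', hsub, hwf'⟩ := ih _ _ h1 hwf
      exact ⟨St', η1' ++ η2 ++ [.write], hext, .assign ht' (h2.mono hext),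
        sub_app_left (sub_app_left hsub), hwf'⟩
  | assignCtx2 hv hst ih =>
    intro ht hwf
    cases ht with
    | @assign _ _ _ _ _ η1 η2 h1 h2 =>
      obtain ⟨St', η2', hext, ht', hsub, hwf'⟩ := ih _ _ h2 hwf
      exact ⟨St', η1 ++ η2' ++ [.write], hext, .assign (h1.mono hext) ht',
        sub_app_left (sub_app_right hsub), hwf'⟩
  | @assignVal l v w hv hm =>
    intro ht hwf
    cases ht with
    | @assign _ _ _ _ τ0 η1 η2 h1 h2 =>
      cases h1 with
      | loc hSl =>
        refine ⟨St, [], fun _ _ h => h, .unitC, by simp, ?_, ?_, ?_⟩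
        · intro y τy hΓ
          obtain ⟨l0, hl0, hSl0⟩ := hwf.1 y τy hΓ
          exact ⟨l0, hl0, hSl0⟩
        · intro l' τ' h'
          by_cases hl' : l' = l
          · subst hl'
            rw [hSl] at h'; injection h' with h'; subst h'
            exact ⟨v, by simp [setMem], hv, val_ty hv h2 Γ⟩
          · obtain ⟨u, hu, huval, huty⟩ := hwf.2.1 l' τ' h'
            exact ⟨u, by simp [setMem, hl', hu], huval, huty⟩
        · intro l' u hu
          simp only [setMem] at hu
          by_cases hl' : l' = l
          · subst hl'; exact ⟨τ0, hSl⟩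
          · simp only [if_neg hl'] at hu
            exact hwf.2.2 l' u hu
  | uopCtx hst ih =>
    intro ht hwf
    cases ht with
    | uop h =>
      obtain ⟨St', η', hext, ht', hsub, hwf'⟩ := ih _ _ h hwf
      exact ⟨St', η', hext, .uop ht', hsub, hwf'⟩
  | uopVal =>
    intro ht hwf
    cases ht with
    | uop h => cases h; exact ⟨St, [], fun _ _ h => h, .intC, by simp, hwf⟩
  | bopCtx1 hst ih =>
    intro ht hwf
    cases ht with
    | @bop _ _ _ _ η1 η2 h1 h2 =>
      obtain ⟨St', η1', hext, ht', hsub, hwf'⟩ := ih _ _ h1 hwf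
      exact ⟨St', η1' ++ η2, hext, .bop ht' (h2.mono hext), sub_app_left hsub, hwf'⟩
  | bopCtx2 hv hst ih =>
    intro ht hwf
    cases ht with
    | @bop _ _ _ _ η1 η2 h1 h2 =>
      obtain ⟨St', η2', hext, ht', hsub, hwf'⟩ := ih _ _ h2 hwf
      exact ⟨St', η1 ++ η2', hext, .bop (h1.mono hext) ht', sub_app_right hsub, hwf'⟩
  | bopVal =>
    intro ht hwf
    cases ht with
    | bop h1 h2 =>
      cases h1; cases h2
      exact ⟨St, [], fun _ _ h => h, .intC, by simp, hwf⟩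
  | letCtx hst ih =>
    intro ht hwf
    cases ht with
    | @letin _ _ _ _ _ _ _ η1 η2 h1 h2 =>
      obtain ⟨St', η1', hext, ht', hsub, hwf'⟩ := ih _ _ h1 hwf
      exact ⟨St', η1' ++ η2, hext, .letin ht' (h2.mono hext), sub_app_left hsub, hwf'⟩
  | letVal hv =>
    intro ht hwf
    cases ht with
    | @letin _ _ _ _ _ _ _ η1 η2 h1 h2 =>
      exact ⟨St, η2, fun _ _ h => h, subst_ty (val_ty hv h1) h2,
        List.subset_append_right _ _, hwf⟩
  | condCtx hst ih =>
    intro ht hwf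
    cases ht with
    | @cond _ _ _ _ _ _ ηe η1 η2 h h1 h2 =>
      obtain ⟨St', ηe', hext, ht', hsub, hwf'⟩ := ih _ _ h hwf
      exact ⟨St', ηe' ++ η1 ++ η2, hext,
        .cond ht' (h1.mono hext) (h2.mono hext),
        sub_app_left (sub_app_left hsub), hwf'⟩
  | condT =>
    intro ht hwf
    cases ht with
    | cond h h1 h2 =>
      refine ⟨St, _, fun _ _ h => h, h1, ?_, hwf⟩
      intro a ha; simp [List.mem_append]; tauto
  | condF =>
    intro ht hwf
    cases ht with
    | cond h h1 h2 =>
      refine ⟨St, _, fun _ _ h => h, h2, ?_, hwf⟩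
      intro a ha; simp [List.mem_append]; tauto
  | someCtx hst ih =>
    intro ht hwf
    cases ht with
    | someE h =>
      obtain ⟨St', η', hext, ht', hsub, hwf'⟩ := ih _ _ h hwf
      exact ⟨St', η', hext, .someE ht', hsub, hwf'⟩
  | matchCtx hst ih =>
    intro ht hwf
    cases ht with
    | @matchE _ _ _ _ _ _ _ _ ηm η1 η2 hm h1 h2 =>
      obtain ⟨St', ηm', hext, ht', hsub, hwf'⟩ := ih _ _ hm hwf
      exact ⟨St', ηm' ++ η1 ++ η2, hext,
        .matchE ht' (h1.mono hext) (h2.mono hext),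
        sub_app_left (sub_app_left hsub), hwf'⟩
  | matchNone =>
    intro ht hwf
    cases ht with
    | matchE hm h1 h2 =>
      refine ⟨St, _, fun _ _ h => h, h1, ?_, hwf⟩
      intro a ha; simp [List.mem_append]; tauto
  | matchSome hv =>
    intro ht hwf
    cases ht with
    | matchE hm h1 h2 =>
      cases hm with
      | someE hm' =>
        refine ⟨St, _, fun _ _ h => h, subst_ty (val_ty hv hm') h2, ?_, hwf⟩
        intro a ha; simp [List.mem_append]; tauto
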